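/- The generating identity for single-column factorial Grothendieck polynomials holds: ∏_{i=1}^{n}(u ⊕ x_i) = (u|t)^n + Σ_{r=1}^{n} (u|t)^{n-r}·(1 + β(u ⊕ t_{n+1-r}))·G_{1^r}(x|⊖t), as polynomials in u, where (u|t)^m = ∏_{j=1}^{m}(u ⊕ t_j), u ⊕ x = u+x+βux, ⊖t_j = −t_j/(1+βt_j), and G_{1^r}(x|⊖t) = Σ_{j=1}^{n+1-r} [∏_{i=1}^{n}(x_i ⊖ t_j)]/[∏_{i≠j, i≤n+1-r}(t_i ⊖ t_j)]. -/

import Mathlib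

open Finset

open Polynomial

/-- Formal sum `a ⊕ b = a + b + β a b`. -/
noncomputable def oplus19 {K : Type*} [Field K] (β a b : K) : K := a + b + β * a * b

/-- Formal difference `a ⊖ b = (a − b)/(1 + β b)`. -/
noncomputable def omin19 {K : Type*} [Field K] (β a b : K) : K := (a - b) / (1 + β * b)

/-- Factorial power `(u|t)^m = ∏_{j=1}^m (u ⊕ t_j)`, `t j` denoting `t_j` (1-based). -/
noncomputable def facPow19 {K : Type*} [Field K] (β : K) (t : ℕ → K) (u : K) (m : ℕ) : K :=
  ∏ j ∈ Finset.Icc 1 m, oplus19 β u (t j)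

/-- Single-column factorial Grothendieck polynomial with negated parameters:
`G_{1^r}(x|⊖t) = Σ_{j=1}^{n+1-r} [∏_{i=1}^n (x_i ⊖ t_j)] / [∏_{i≠j, i≤n+1-r} (t_i ⊖ t_j)]`. -/
noncomputable def Gcol19 {K : Type*} [Field K] {n : ℕ} (β : K) (t : ℕ → K)
    (x : Fin n → K) (r : ℕ) : K :=
  ∑ j ∈ Finset.Icc 1 (n + 1 - r),
    (∏ i : Fin n, omin19 β (x i) (t j))
      / (∏ i ∈ (Finset.Icc 1 (n + 1 - r)).erase j, omin19 β (t i) (t j))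

lemma lemA19 {K : Type*} [CommRing K] (z : K) (w : ℕ → K) (j N : ℕ)
    (hj : j ∈ Finset.Icc 1 N) :
    ∑ m ∈ Finset.Icc j N,
        (∏ k ∈ Finset.Icc 1 (m - 1), (z - w k)) * (∏ i ∈ Finset.Icc (m + 1) N, (w j - w i))
      = ∏ i ∈ (Finset.Icc 1 N).erase j, (z - w i) := by
  simp only [Finset.mem_Icc] at hj
  obtain ⟨hj1, hjN⟩ := hj
  induction N, hjN using Nat.le_induction with
  | base =>
      have h2 : (Finset.Icc 1 j).erase j = Finset.Icc 1 (j - 1) := by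
        ext k; simp only [Finset.mem_erase, Finset.mem_Icc]; omega
      rw [Finset.Icc_self, h2]
      simp [Finset.Icc_eq_empty_of_lt (by omega : j < j + 1)]
  | succ N hN ih =>
      have hsplit : Finset.Icc j (N + 1) = insert (N + 1) (Finset.Icc j N) := by
        ext k; simp only [Finset.mem_insert, Finset.mem_Icc]; omega
      rw [hsplit, Finset.sum_insert (by simp)]
      have hstep : ∀ m ∈ Finset.Icc j N,
          (∏ k ∈ Finset.Icc 1 (m - 1), (z - w k)) *
              (∏ i ∈ Finset.Icc (m + 1) (N + 1), (w j - w i))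
            = (w j - w (N + 1)) * ((∏ k ∈ Finset.Icc 1 (m - 1), (z - w k)) *
              (∏ i ∈ Finset.Icc (m + 1) N, (w j - w i))) := by
        intro m hm
        simp only [Finset.mem_Icc] at hm
        have : Finset.Icc (m + 1) (N + 1) = insert (N + 1) (Finset.Icc (m + 1) N) := by
          ext k; simp only [Finset.mem_insert, Finset.mem_Icc]; omega
        rw [this, Finset.prod_insert (by simp)]
        ring
      rw [Finset.sum_congr rfl hstep, ← Finset.mul_sum, ih]
      have hN1 : (Finset.Icc 1 (N + 1)).erase j = insert (N + 1) ((Finset.Icc 1 N).erase j) := by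
        ext k; simp only [Finset.mem_erase, Finset.mem_insert, Finset.mem_Icc]; omega
      rw [hN1, Finset.prod_insert (by simp)]
      have h1 : Finset.Icc 1 ((N : ℕ) + 1 - 1) = Finset.Icc 1 N := by norm_num
      have h2 : ∏ k ∈ Finset.Icc 1 N, (z - w k)
          = (z - w j) * ∏ k ∈ (Finset.Icc 1 N).erase j, (z - w k) :=
        (Finset.mul_prod_erase _ _ (by simp only [Finset.mem_Icc]; omega)).symm
      rw [h1, h2]
      have h3 : Finset.Icc (N + 1 + 1) (N + 1) = ∅ :=
        Finset.Icc_eq_empty_of_lt (by omega)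
      rw [h3]
      simp only [Finset.prod_empty]
      ring

lemma sumswap19 {M : Type*} [AddCommMonoid M] (n : ℕ) (f : ℕ → ℕ → M) :
    ∑ m ∈ Finset.Icc 1 n, ∑ j ∈ Finset.Icc 1 m, f m j
      = ∑ j ∈ Finset.Icc 1 n, ∑ m ∈ Finset.Icc j n, f m j := by
  have h := Finset.sum_Ico_Ico_comm 1 (n + 1) (fun j m => f m j)
  have e1 : ∀ a : ℕ, Finset.Icc 1 a = Finset.Ico 1 (a + 1) := by
    intro a; ext k; simp only [Finset.mem_Icc, Finset.mem_Ico]; omega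
  have e2 : ∀ j : ℕ, Finset.Icc j n = Finset.Ico j (n + 1) := by
    intro j; ext k; simp only [Finset.mem_Icc, Finset.mem_Ico]; omega
  calc ∑ m ∈ Finset.Icc 1 n, ∑ j ∈ Finset.Icc 1 m, f m j
      = ∑ m ∈ Finset.Ico 1 (n + 1), ∑ j ∈ Finset.Ico 1 (m + 1), f m j := by
        rw [← e1]; exact Finset.sum_congr rfl fun m _ => by rw [← e1]
    _ = ∑ j ∈ Finset.Ico 1 (n + 1), ∑ m ∈ Finset.Ico j (n + 1), f m j := h.symm
    _ = ∑ j ∈ Finset.Icc 1 n, ∑ m ∈ Finset.Icc j n, f m j := by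
        rw [← e1]; exact Finset.sum_congr rfl fun j _ => by rw [← e2]

lemma newtonLagrange19 {K : Type*} [Field K] (n : ℕ) (u : K) (w y : ℕ → K)
    (hw : ∀ i ∈ Finset.Icc 1 n, ∀ j ∈ Finset.Icc 1 n, i ≠ j → w i ≠ w j) :
    ∑ m ∈ Finset.Icc 1 n, (∏ k ∈ Finset.Icc 1 (m - 1), (u - w k))
        * (∑ j ∈ Finset.Icc 1 m, y j / ∏ i ∈ (Finset.Icc 1 m).erase j, (w j - w i))
      = ∑ j ∈ Finset.Icc 1 n,
          (y j / ∏ i ∈ (Finset.Icc 1 n).erase j, (w j - w i))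
            * ∏ i ∈ (Finset.Icc 1 n).erase j, (u - w i) := by
  simp only [Finset.mul_sum]
  rw [sumswap19 n (fun m j => (∏ k ∈ Finset.Icc 1 (m - 1), (u - w k))
      * (y j / ∏ i ∈ (Finset.Icc 1 m).erase j, (w j - w i)))]
  refine Finset.sum_congr rfl ?_
  intro j hj
  simp only [Finset.mem_Icc] at hj
  have key : ∀ m ∈ Finset.Icc j n,
      (∏ k ∈ Finset.Icc 1 (m - 1), (u - w k))
          * (y j / ∏ i ∈ (Finset.Icc 1 m).erase j, (w j - w i))
        = (y j / ∏ i ∈ (Finset.Icc 1 n).erase j, (w j - w i))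
            * ((∏ k ∈ Finset.Icc 1 (m - 1), (u - w k))
                * (∏ i ∈ Finset.Icc (m + 1) n, (w j - w i))) := by
    intro m hm
    simp only [Finset.mem_Icc] at hm
    have hunion : (Finset.Icc 1 n).erase j
        = ((Finset.Icc 1 m).erase j) ∪ Finset.Icc (m + 1) n := by
      ext k
      simp only [Finset.mem_union, Finset.mem_erase, Finset.mem_Icc]
      omega
    have hdisj : Disjoint ((Finset.Icc 1 m).erase j) (Finset.Icc (m + 1) n) := by
      rw [Finset.disjoint_left]
      intro k hk hk'
      simp only [Finset.mem_erase, Finset.mem_Icc] at hk hk'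
      omega
    have hB : (∏ i ∈ Finset.Icc (m + 1) n, (w j - w i)) ≠ 0 := by
      apply Finset.prod_ne_zero_iff.mpr
      intro i hi
      simp only [Finset.mem_Icc] at hi
      exact sub_ne_zero_of_ne (hw j (by simp only [Finset.mem_Icc]; omega) i
        (by simp only [Finset.mem_Icc]; omega) (by omega))
    rw [hunion, Finset.prod_union hdisj]
    have hmd := mul_div_mul_right (y j)
      (∏ i ∈ (Finset.Icc 1 m).erase j, (w j - w i)) hB
    calc (∏ k ∈ Finset.Icc 1 (m - 1), (u - w k))
          * (y j / ∏ i ∈ (Finset.Icc 1 m).erase j, (w j - w i))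
        = (y j * (∏ i ∈ Finset.Icc (m + 1) n, (w j - w i))
            / ((∏ i ∈ (Finset.Icc 1 m).erase j, (w j - w i))
                * (∏ i ∈ Finset.Icc (m + 1) n, (w j - w i))))
            * (∏ k ∈ Finset.Icc 1 (m - 1), (u - w k)) := by rw [hmd]; ring
      _ = _ := by ring
  rw [Finset.sum_congr rfl key, ← Finset.mul_sum,
    lemA19 u w j n (by simp only [Finset.mem_Icc]; omega)]

noncomputable def vv19 {K : Type*} [Field K] (β : K) (t : ℕ → K) (j : ℕ) : K :=
  -(t j) / (1 + β * t j)

section scalar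
variable {K : Type*} [Field K] (β : K) (t : ℕ → K)
lemma oplus_lin19 (u b : K) : oplus19 β u b = (1 + β * b) * u + b := by unfold oplus19; ring
lemma hv_one19 (j : ℕ) (h : 1 + β * t j ≠ 0) :
    1 + β * vv19 β t j = (1 + β * t j)⁻¹ := by unfold vv19; field_simp; ring
lemma oplus_t19 (u : K) (j : ℕ) (h : 1 + β * t j ≠ 0) :
    oplus19 β u (t j) = (1 + β * t j) * (u - vv19 β t j) := by
  unfold oplus19 vv19; field_simp; linear_combination (-(t j)) * mul_inv_cancel₀ h
lemma omin_tt19 (i j : ℕ) (hi : 1 + β * t i ≠ 0) (hj : 1 + β * t j ≠ 0) :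
    omin19 β (t i) (t j) = (1 + β * t i) * (vv19 β t j - vv19 β t i) := by
  unfold omin19 vv19; field_simp; linear_combination (t i) * mul_inv_cancel₀ hj - (t i) * mul_inv_cancel₀ hi
lemma oplus_v19 (a : K) (j : ℕ) (h : 1 + β * t j ≠ 0) :
    oplus19 β (vv19 β t j) a = omin19 β a (t j) := by
  unfold oplus19 omin19 vv19; field_simp; linear_combination (-a) * mul_inv_cancel₀ h
lemma vinj19 (i j : ℕ) (hi : 1 + β * t i ≠ 0) (hj : 1 + β * t j ≠ 0)
    (hij : t i ≠ t j) : vv19 β t i ≠ vv19 β t j := by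
  intro h; apply hij; unfold vv19 at h; field_simp at h; linear_combination (-(1 + β * t i)) * h - (t i * (1 + β * t j)) * mul_inv_cancel₀ hi
end scalar

lemma step2_19 {K : Type*} [Field K] (n : ℕ) (β u : K) (x : Fin n → K) (t : ℕ → K)
    (ht : ∀ i j, i ≠ j → t i ≠ t j) (hβ : ∀ i, 1 + β * t i ≠ 0) :
    ∏ i : Fin n, oplus19 β u (x i)
      = (∏ j ∈ Finset.Icc 1 n, (1 + β * t j)) * ∏ j ∈ Finset.Icc 1 n, (u - vv19 β t j)
        + (1 + β * u) * ∑ j ∈ Finset.Icc 1 n,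
            (((1 + β * t j) * ∏ i : Fin n, omin19 β (x i) (t j))
              / ∏ i ∈ (Finset.Icc 1 n).erase j, (vv19 β t j - vv19 β t i))
              * ∏ i ∈ (Finset.Icc 1 n).erase j, (u - vv19 β t i) := by
  classical
  rcases Nat.eq_zero_or_pos n with hn | hn
  · subst hn; simp
  set v : ℕ → K := vv19 β t with hv
  set c : ℕ → K := fun j => ((1 + β * t j) * ∏ i : Fin n, omin19 β (x i) (t j))
      / ∏ i ∈ (Finset.Icc 1 n).erase j, (v j - v i) with hc
  -- nonvanishing of denominators
  have hΔ : ∀ k ∈ Finset.Icc 1 n, (∏ i ∈ (Finset.Icc 1 n).erase k, (v k - v i)) ≠ 0 := by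
    intro k hk
    rw [Finset.prod_ne_zero_iff]
    intro i hi
    have hik : i ≠ k := (Finset.mem_erase.mp hi).1
    exact sub_ne_zero_of_ne (vinj19 β t k i (hβ k) (hβ i) (ht k i (Ne.symm hik)))
  -- the polynomial
  set A : K[X] := ∏ j ∈ Finset.Icc 1 n, (X - C (v j)) with hA
  set M : K[X] := ∑ j ∈ Finset.Icc 1 n, C (c j) * ∏ i ∈ (Finset.Icc 1 n).erase j, (X - C (v i))
    with hM
  set B : K[X] := ∏ i : Fin n, (C (1 + β * x i) * X + C (x i)) with hB
  set P : K[X] := C (∏ j ∈ Finset.Icc 1 n, (1 + β * t j)) * A + (1 + C β * X) * M - B with hP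
  -- degree facts
  have hcardIcc : (Finset.Icc 1 n).card = n := by rw [Nat.card_Icc]; omega
  have hAmonic : A.Monic := monic_prod_of_monic _ _ fun j _ => monic_X_sub_C _
  have hAdeg : A.natDegree = n := by
    rw [hA, natDegree_prod_of_monic _ _ fun j _ => monic_X_sub_C _]
    simp [natDegree_X_sub_C, hcardIcc]
  have hMdeg : M.natDegree ≤ n - 1 := by
    rw [hM]
    apply Polynomial.natDegree_sum_le_of_forall_le
    intro j hj
    refine le_trans (natDegree_mul_le) ?_
    have h1 : (∏ i ∈ (Finset.Icc 1 n).erase j, (X - C (v i))).natDegree = n - 1 := by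
      rw [natDegree_prod_of_monic _ _ fun i _ => monic_X_sub_C _]
      simp [natDegree_X_sub_C, Finset.card_erase_of_mem hj, hcardIcc]
    simp [h1]
  have hBdeg : B.natDegree ≤ n := by
    rw [hB]
    refine le_trans (natDegree_prod_le _ _) ?_
    refine le_trans (Finset.sum_le_card_nsmul _ _ 1 fun i _ => natDegree_linear_le) ?_
    simp
  -- evaluation at the interpolation nodes
  have heval : ∀ k ∈ Finset.Icc 1 n, P.eval (v k) = 0 := by
    intro k hk
    have e1 : (∏ j ∈ Finset.Icc 1 n, (v k - v j)) = 0 :=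
      Finset.prod_eq_zero hk (sub_self _)
    have e2 : ∀ j ∈ Finset.Icc 1 n, j ≠ k →
        c j * ∏ i ∈ (Finset.Icc 1 n).erase j, (v k - v i) = 0 := by
      intro j hj hjk
      have hkmem : k ∈ (Finset.Icc 1 n).erase j := Finset.mem_erase.mpr ⟨Ne.symm hjk, hk⟩
      rw [Finset.prod_eq_zero hkmem (sub_self (v k)), mul_zero]
    have e3 : c k * ∏ i ∈ (Finset.Icc 1 n).erase k, (v k - v i)
        = (1 + β * t k) * ∏ i : Fin n, omin19 β (x i) (t k) := by
      rw [hc]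
      exact div_mul_cancel₀ _ (hΔ k hk)
    have e4 : ∏ i : Fin n, ((1 + β * x i) * v k + x i)
        = ∏ i : Fin n, omin19 β (x i) (t k) := by
      refine Finset.prod_congr rfl fun i _ => ?_
      rw [← oplus_lin19, hv, oplus_v19 β t _ k (hβ k)]
    rw [hP]
    simp only [eval_sub, eval_add, eval_mul, eval_C, eval_X, eval_one, hA, hM, hB,
      eval_prod, eval_finset_sum]
    rw [e1, Finset.sum_eq_single_of_mem k hk e2, e3, e4, hv, hv_one19 β t k (hβ k),
      inv_mul_cancel_left₀ (hβ k)]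
    ring
  -- P = 0
  have hPzero : P = 0 := by
    rcases eq_or_ne β 0 with hb0 | hb0
    · -- β = 0 : degree drop argument
      subst hb0
      have hBmonic : B.Monic := by
        rw [hB]
        have : ∀ i : Fin n, (C (1 + (0:K) * x i) * X + C (x i)) = X + C (x i) := by
          intro i; simp
        rw [Finset.prod_congr rfl fun i _ => this i]
        exact monic_prod_of_monic _ _ fun i _ => monic_X_add_C _
      have hBdeg' : B.natDegree = n := by
        rw [hB]
        have : ∀ i : Fin n, (C (1 + (0:K) * x i) * X + C (x i)) = X + C (x i) := by
          intro i; simp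
        rw [Finset.prod_congr rfl fun i _ => this i,
          natDegree_prod_of_monic _ _ fun i _ => monic_X_add_C _]
        simp [natDegree_X_add_C]
      have hPeq : P = (A - B) + M := by
        rw [hP]
        have h1 : C (∏ j ∈ Finset.Icc 1 n, (1 + (0:K) * t j)) = 1 := by simp
        have h2 : (1 + C (0:K) * X) = 1 := by simp
        rw [h1, h2]; ring
      have hABdeg : (A - B).natDegree ≤ n - 1 := by
        by_cases hAB : A - B = 0
        · simp [hAB]
        · have hdlt : (A - B).degree < A.degree := by
            apply degree_sub_lt
            · rw [degree_eq_natDegree hAmonic.ne_zero, degree_eq_natDegree hBmonic.ne_zero,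
                hAdeg, hBdeg']
            · exact hAmonic.ne_zero
            · rw [hAmonic.leadingCoeff, hBmonic.leadingCoeff]
          have hdA : A.degree = (n : WithBot ℕ) := by
            rw [degree_eq_natDegree hAmonic.ne_zero, hAdeg]
          have : (A - B).natDegree < n :=
            (natDegree_lt_iff_degree_lt hAB).mpr (hdA ▸ hdlt)
          omega
      have hPdeg : P.natDegree ≤ n - 1 := by
        rw [hPeq]
        exact le_trans (natDegree_add_le _ _) (max_le hABdeg hMdeg)
      apply eq_zero_of_natDegree_lt_card_of_eval_eq_zero' P
        ((Finset.Icc 1 n).image v)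
      · intro z hz
        obtain ⟨k, hk, rfl⟩ := Finset.mem_image.mp hz
        exact heval k hk
      · have hinj : Set.InjOn v (Finset.Icc 1 n) := by
          intro a ha b hb hab
          by_contra hne
          exact vinj19 0 t a b (hβ a) (hβ b) (ht a b hne) hab
        rw [Finset.card_image_of_injOn hinj, hcardIcc]
        omega
    · -- β ≠ 0 : extra root at -β⁻¹
      have hPdeg : P.natDegree ≤ n := by
        rw [hP]
        refine le_trans (natDegree_sub_le _ _) (max_le (le_trans (natDegree_add_le _ _)
          (max_le ?_ ?_)) hBdeg)
        · exact le_trans natDegree_mul_le (by rw [natDegree_C, hAdeg]; omega)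
        · refine le_trans natDegree_mul_le ?_
          have h1 : (1 + C β * X).natDegree ≤ 1 := by
            refine le_trans (natDegree_add_le _ _) ?_
            simp only [natDegree_one]
            refine max_le (by norm_num) (le_trans natDegree_mul_le (by simp))
          omega
      have heval0 : P.eval (-β⁻¹) = 0 := by
        rw [hP]
        simp only [eval_sub, eval_add, eval_mul, eval_C, eval_X, eval_one, hA, hM, hB,
          eval_prod, eval_finset_sum]
        have h0 : (1 : K) + β * -β⁻¹ = 0 := by field_simp; ring
        have h1 : (∏ j ∈ Finset.Icc 1 n, (1 + β * t j)) *
            ∏ j ∈ Finset.Icc 1 n, (-β⁻¹ - v j) = (-β⁻¹) ^ n := by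
          rw [← Finset.prod_mul_distrib]
          have : ∀ j ∈ Finset.Icc 1 n, (1 + β * t j) * (-β⁻¹ - v j) = -β⁻¹ := by
            intro j _
            rw [hv]; unfold vv19
            have h := hβ j
            field_simp
            ring
          rw [Finset.prod_congr rfl this, Finset.prod_const, hcardIcc]
        have h2 : ∏ i : Fin n, ((1 + β * x i) * -β⁻¹ + x i) = (-β⁻¹) ^ n := by
          have : ∀ i : Fin n, (1 + β * x i) * -β⁻¹ + x i = -β⁻¹ := by
            intro i; field_simp; ring
          rw [Finset.prod_congr rfl fun i _ => this i, Finset.prod_const]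
          simp
        rw [h0, h1, h2]
        ring
      apply eq_zero_of_natDegree_lt_card_of_eval_eq_zero' P
        (insert (-β⁻¹) ((Finset.Icc 1 n).image v))
      · intro z hz
        rcases Finset.mem_insert.mp hz with rfl | hz'
        · exact heval0
        · obtain ⟨k, hk, rfl⟩ := Finset.mem_image.mp hz'
          exact heval k hk
      · have hinj : Set.InjOn v (Finset.Icc 1 n) := by
          intro a ha b hb hab
          by_contra hne
          exact vinj19 β t a b (hβ a) (hβ b) (ht a b hne) hab
        have hnotmem : -β⁻¹ ∉ (Finset.Icc 1 n).image v := by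
          rw [Finset.mem_image]
          rintro ⟨k, hk, hvk⟩
          have h1 : 1 + β * v k = (1 + β * t k)⁻¹ := hv_one19 β t k (hβ k)
          rw [hvk] at h1
          have h2 : (1 : K) + β * -β⁻¹ = 0 := by field_simp; ring
          rw [h2] at h1
          exact inv_ne_zero (hβ k) h1.symm
        rw [Finset.card_insert_of_notMem hnotmem, Finset.card_image_of_injOn hinj, hcardIcc]
        omega
  -- conclude by evaluating at u
  have hgoal := congrArg (Polynomial.eval u) hPzero
  simp only [hP, hA, hM, hB, eval_sub, eval_add, eval_mul, eval_C, eval_X, eval_one,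
    eval_prod, eval_finset_sum, eval_zero] at hgoal
  have hF : ∏ i : Fin n, oplus19 β u (x i) = ∏ i : Fin n, ((1 + β * x i) * u + x i) :=
    Finset.prod_congr rfl fun i _ => oplus_lin19 β u (x i)
  rw [hF]
  linear_combination -hgoal

/-- Generating identity for single-column factorial Grothendieck polynomials:
`∏_{i=1}^n (u ⊕ x_i) = (u|t)^n + Σ_{r=1}^n (u|t)^{n-r} (1 + β(u ⊕ t_{n+1-r})) G_{1^r}(x|⊖t)`. -/
theorem column_grothendieck_factorial_generating_function {K : Type*} [Field K]
    (n : ℕ) (β u : K) (x : Fin n → K) (t : ℕ → K)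
    (ht : ∀ i j, i ≠ j → t i ≠ t j) (hβ : ∀ i, 1 + β * t i ≠ 0) :
    (∏ i : Fin n, oplus19 β u (x i))
      = facPow19 β t u n
        + ∑ r ∈ Finset.Icc 1 n,
            facPow19 β t u (n - r) * (1 + β * oplus19 β u (t (n + 1 - r)))
              * Gcol19 β t x r := by
  classical
  rcases Nat.eq_zero_or_pos n with hn | hn
  · subst hn; simp [facPow19]
  set v : ℕ → K := vv19 β t with hv
  have hw : ∀ i ∈ Finset.Icc 1 n, ∀ j ∈ Finset.Icc 1 n, i ≠ j → v i ≠ v j :=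
    fun i _ j _ hij => vinj19 β t i j (hβ i) (hβ j) (ht i j hij)
  have hfac : ∀ m : ℕ, facPow19 β t u m
      = (∏ j ∈ Finset.Icc 1 m, (1 + β * t j)) * ∏ j ∈ Finset.Icc 1 m, (u - v j) := by
    intro m
    rw [facPow19, ← Finset.prod_mul_distrib]
    exact Finset.prod_congr rfl fun j _ => oplus_t19 β t u j (hβ j)
  -- reindex r ↦ m = n + 1 - r
  have hreindex : ∑ r ∈ Finset.Icc 1 n,
        facPow19 β t u (n - r) * (1 + β * oplus19 β u (t (n + 1 - r))) * Gcol19 β t x r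
      = ∑ m ∈ Finset.Icc 1 n,
          facPow19 β t u (m - 1) * (1 + β * oplus19 β u (t m)) * Gcol19 β t x (n + 1 - m) := by
    refine Finset.sum_nbij' (fun r => n + 1 - r) (fun m => n + 1 - m) ?_ ?_ ?_ ?_ ?_
    · intro r hr; simp only [Finset.mem_Icc] at *; omega
    · intro m hm; simp only [Finset.mem_Icc] at *; omega
    · intro r hr; simp only [Finset.mem_Icc] at hr
      show n + 1 - (n + 1 - r) = r; omega
    · intro m hm; simp only [Finset.mem_Icc] at hm
      show n + 1 - (n + 1 - m) = m; omega
    · intro r hr; simp only [Finset.mem_Icc] at hr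
      rw [show n + 1 - r - 1 = n - r from by omega,
        show n + 1 - (n + 1 - r) = r from by omega]
  -- per-term identity
  have hterm : ∀ m ∈ Finset.Icc 1 n,
      facPow19 β t u (m - 1) * (1 + β * oplus19 β u (t m)) * Gcol19 β t x (n + 1 - m)
        = (1 + β * u) * ((∏ k ∈ Finset.Icc 1 (m - 1), (u - v k))
            * ∑ j ∈ Finset.Icc 1 m,
                ((1 + β * t j) * ∏ i : Fin n, omin19 β (x i) (t j))
                  / ∏ i ∈ (Finset.Icc 1 m).erase j, (v j - v i)) := by
    intro m hm
    simp only [Finset.mem_Icc] at hm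
    have hb : 1 + β * oplus19 β u (t m) = (1 + β * u) * (1 + β * t m) := by
      unfold oplus19; ring
    have hmm : n + 1 - (n + 1 - m) = m := by omega
    have hG : Gcol19 β t x (n + 1 - m)
        = ∑ j ∈ Finset.Icc 1 m,
            (∏ i : Fin n, omin19 β (x i) (t j))
              / ((∏ i ∈ (Finset.Icc 1 m).erase j, (1 + β * t i))
                  * ∏ i ∈ (Finset.Icc 1 m).erase j, (v j - v i)) := by
      rw [Gcol19, hmm]
      refine Finset.sum_congr rfl fun j hj => ?_
      congr 1
      rw [← Finset.prod_mul_distrib]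
      exact Finset.prod_congr rfl fun i _ => omin_tt19 β t i j (hβ i) (hβ j)
    have hCm : (∏ j ∈ Finset.Icc 1 (m - 1), (1 + β * t j)) * (1 + β * t m)
        = ∏ j ∈ Finset.Icc 1 m, (1 + β * t j) := by
      have : Finset.Icc 1 m = insert m (Finset.Icc 1 (m - 1)) := by
        ext k; simp only [Finset.mem_insert, Finset.mem_Icc]; omega
      rw [this, Finset.prod_insert (by simp only [Finset.mem_Icc]; omega)]
      ring
    rw [hfac, hb, hG, Finset.mul_sum, Finset.mul_sum, Finset.mul_sum]
    refine Finset.sum_congr rfl fun j hj => ?_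
    have hjm : j ∈ Finset.Icc 1 m := hj
    have hEj : (∏ i ∈ (Finset.Icc 1 m).erase j, (1 + β * t i)) ≠ 0 :=
      Finset.prod_ne_zero_iff.mpr fun i _ => hβ i
    have hCj : (1 + β * t j) * ∏ i ∈ (Finset.Icc 1 m).erase j, (1 + β * t i)
        = ∏ i ∈ Finset.Icc 1 m, (1 + β * t i) :=
      Finset.mul_prod_erase (Finset.Icc 1 m) (fun i => 1 + β * t i) hjm
    have hkey : (∏ i ∈ Finset.Icc 1 m, (1 + β * t i)) *
        ((∏ i : Fin n, omin19 β (x i) (t j))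
          / ((∏ i ∈ (Finset.Icc 1 m).erase j, (1 + β * t i))
              * ∏ i ∈ (Finset.Icc 1 m).erase j, (v j - v i)))
        = ((1 + β * t j) * ∏ i : Fin n, omin19 β (x i) (t j))
            / ∏ i ∈ (Finset.Icc 1 m).erase j, (v j - v i) := by
      rw [← hCj, mul_assoc, mul_div_assoc]
      congr 1
      rw [mul_div_assoc']
      exact mul_div_mul_left _ _ hEj
    have hkey2 : (∏ i ∈ Finset.Icc 1 (m - 1), (1 + β * t i)) * (1 + β * t m) *
        ((∏ i : Fin n, omin19 β (x i) (t j))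
          / ((∏ i ∈ (Finset.Icc 1 m).erase j, (1 + β * t i))
              * ∏ i ∈ (Finset.Icc 1 m).erase j, (v j - v i)))
        = ((1 + β * t j) * ∏ i : Fin n, omin19 β (x i) (t j))
            / ∏ i ∈ (Finset.Icc 1 m).erase j, (v j - v i) := by
      rw [hCm, hkey]
    linear_combination ((1 + β * u) * ∏ k ∈ Finset.Icc 1 (m - 1), (u - v k)) * hkey2
  rw [hreindex, Finset.sum_congr rfl hterm, ← Finset.mul_sum, hfac n]
  have hNL := newtonLagrange19 n u v
    (fun j => (1 + β * t j) * ∏ i : Fin n, omin19 β (x i) (t j)) hw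
  rw [hNL]
  exact step2_19 n β u x t ht hβ
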